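/- Assume the negative class-conditionals of train and test coincide (p_n^tr = p_n^te = p_n), with training prior π_tr ∈ [0,1) and test prior π_te ∈ [0,1]. Then the full test risk R_te = π_te E_{p_p^te}[ℓ(g(X),+1)] + (1−π_te) E_{p_n}[ℓ(g(X),−1)] can be written entirely in terms of quantities estimable from the labeled-positive training data, the unlabeled training marginal p_tr, and the unlabeled test marginal p_te: R_te = ( E_{p_te}[ℓ(g(X),+1)] − (1−π_te)·(E_{p_tr}[ℓ(g(X),+1)] − π_tr E_{p_p^tr}[ℓ(g(X),+1)])/(1−π_tr) ) + (1−π_te)·(E_{p_tr}[ℓ(g(X),−1)] − π_tr E_{p_p^tr}[ℓ(g(X),−1)])/(1−π_tr). -/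

import Mathlib

/-!
The negative class-conditional `p_n` is shared by train and test. Solving the train mixture
`p_tr = π_tr p_p^tr + (1 - π_tr) p_n` for `p_n` expresses every `p_n`-expectation through `p_tr`
and `p_p^tr` (PU decomposition), and solving the test mixture for its positive part expresses the
positive test risk through `p_te` and `p_n` (NU decomposition). Substituting the first into the
second and into the negative test risk gives the identity.
-/

open MeasureTheory

section Mixture

variable {α E : Type*} [MeasurableSpace α] [NormedAddCommGroup E] [NormedSpace ℝ E]

theorem integral_ofReal_smul_add_ofReal_smul {μ ν : Measure α} {f : α → E} {a b : ℝ}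
    (ha : 0 ≤ a) (hb : 0 ≤ b) (hμ : Integrable f μ) (hν : Integrable f ν) :
    ∫ x, f x ∂(ENNReal.ofReal a • μ + ENNReal.ofReal b • ν)
      = a • ∫ x, f x ∂μ + b • ∫ x, f x ∂ν := by
  rw [integral_add_measure (hμ.smul_measure ENNReal.ofReal_ne_top)
      (hν.smul_measure ENNReal.ofReal_ne_top),
    integral_smul_measure, integral_smul_measure,
    ENNReal.toReal_ofReal ha, ENNReal.toReal_ofReal hb]

variable {p pp pn : Measure α} {f : α → ℝ} {π : ℝ}

theorem integral_mixture (hπ0 : 0 ≤ π) (hπ1 : π ≤ 1)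
    (hp : p = ENNReal.ofReal π • pp + ENNReal.ofReal (1 - π) • pn)
    (hpp : Integrable f pp) (hpn : Integrable f pn) :
    ∫ x, f x ∂p = π * ∫ x, f x ∂pp + (1 - π) * ∫ x, f x ∂pn := by
  rw [hp, integral_ofReal_smul_add_ofReal_smul hπ0 (sub_nonneg.2 hπ1) hpp hpn, smul_eq_mul,
    smul_eq_mul]

theorem integral_positive_eq_of_mixture (hπ0 : 0 ≤ π) (hπ1 : π ≤ 1)
    (hp : p = ENNReal.ofReal π • pp + ENNReal.ofReal (1 - π) • pn)
    (hpp : Integrable f pp) (hpn : Integrable f pn) :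
    π * ∫ x, f x ∂pp = ∫ x, f x ∂p - (1 - π) * ∫ x, f x ∂pn := by
  rw [integral_mixture hπ0 hπ1 hp hpp hpn]
  ring

theorem integral_negative_eq_of_mixture (hπ0 : 0 ≤ π) (hπ1 : π < 1)
    (hp : p = ENNReal.ofReal π • pp + ENNReal.ofReal (1 - π) • pn)
    (hpp : Integrable f pp) (hpn : Integrable f pn) :
    ∫ x, f x ∂pn = (∫ x, f x ∂p - π * ∫ x, f x ∂pp) / (1 - π) := by
  rw [integral_mixture hπ0 hπ1.le hp hpp hpn, eq_div_iff (sub_ne_zero.2 hπ1.ne')]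
  ring

end Mixture

theorem purr_population_identity_general
    {α : Type*} [MeasurableSpace α]
    (pptr ppte pn : Measure α)
    (πtr : ℝ) (hπtr0 : 0 ≤ πtr) (hπtr1 : πtr < 1)
    (πte : ℝ) (hπte0 : 0 ≤ πte) (hπte1 : πte ≤ 1)
    (ptr pte : Measure α)
    (hptr : ptr = ENNReal.ofReal πtr • pptr + ENNReal.ofReal (1 - πtr) • pn)
    (hpte : pte = ENNReal.ofReal πte • ppte + ENNReal.ofReal (1 - πte) • pn)
    (g : α → ℝ)
    (ℓ : ℝ → ℤ → ℝ)
    (hint_pptr : ∀ y : ℤ, Integrable (fun x => ℓ (g x) y) pptr)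
    (hint_ppte : ∀ y : ℤ, Integrable (fun x => ℓ (g x) y) ppte)
    (hint_pn : ∀ y : ℤ, Integrable (fun x => ℓ (g x) y) pn) :
    πte * ∫ x, ℓ (g x) 1 ∂ppte + (1 - πte) * ∫ x, ℓ (g x) (-1) ∂pn
      = ((∫ x, ℓ (g x) 1 ∂pte)
          - (1 - πte) * ((∫ x, ℓ (g x) 1 ∂ptr - πtr * ∫ x, ℓ (g x) 1 ∂pptr)
              / (1 - πtr)))
        + (1 - πte) * ((∫ x, ℓ (g x) (-1) ∂ptr - πtr * ∫ x, ℓ (g x) (-1) ∂pptr)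
            / (1 - πtr)) := by
  rw [integral_positive_eq_of_mixture hπte0 hπte1 hpte (hint_ppte 1) (hint_pn 1),
    integral_negative_eq_of_mixture hπtr0 hπtr1 hptr (hint_pptr 1) (hint_pn 1),
    integral_negative_eq_of_mixture hπtr0 hπtr1 hptr (hint_pptr (-1)) (hint_pn (-1))]

/-- Population-level PURR identity: under a shared negative class-conditional
`p_n`, the full test risk can be written entirely in terms of the labeled
positive train class-conditional `p_p^tr`, the train marginal `p_tr`, and the
test marginal `p_te`. -/
theorem purr_population_identity
    {α : Type*} [MeasurableSpace α]
    (pptr ppte pn : Measure α)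
    [IsProbabilityMeasure pptr] [IsProbabilityMeasure ppte]
    [IsProbabilityMeasure pn]
    (πtr : ℝ) (hπtr0 : 0 ≤ πtr) (hπtr1 : πtr < 1)
    (πte : ℝ) (hπte0 : 0 ≤ πte) (hπte1 : πte ≤ 1)
    (ptr pte : Measure α)
    (hptr : ptr = ENNReal.ofReal πtr • pptr + ENNReal.ofReal (1 - πtr) • pn)
    (hpte : pte = ENNReal.ofReal πte • ppte + ENNReal.ofReal (1 - πte) • pn)
    (g : α → ℝ) (hg : Measurable g)
    (ℓ : ℝ → ℤ → ℝ) (hℓmeas : ∀ y : ℤ, Measurable fun t => ℓ t y)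
    (hℓnn : ∀ (t : ℝ) (y : ℤ), 0 ≤ ℓ t y)
    (hint_pptr : ∀ y : ℤ, Integrable (fun x => ℓ (g x) y) pptr)
    (hint_ppte : ∀ y : ℤ, Integrable (fun x => ℓ (g x) y) ppte)
    (hint_pn : ∀ y : ℤ, Integrable (fun x => ℓ (g x) y) pn) :
    πte * ∫ x, ℓ (g x) 1 ∂ppte + (1 - πte) * ∫ x, ℓ (g x) (-1) ∂pn
      = ((∫ x, ℓ (g x) 1 ∂pte)
          - (1 - πte) * ((∫ x, ℓ (g x) 1 ∂ptr - πtr * ∫ x, ℓ (g x) 1 ∂pptr)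
              / (1 - πtr)))
        + (1 - πte) * ((∫ x, ℓ (g x) (-1) ∂ptr - πtr * ∫ x, ℓ (g x) (-1) ∂pptr)
            / (1 - πtr)) :=
  purr_population_identity_general pptr ppte pn πtr hπtr0 hπtr1 πte hπte0 hπte1 ptr pte hptr hpte g
    ℓ hint_pptr hint_ppte hint_pn
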